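/- arXiv:1510.03839 — 5 statements merged into one kernel-verified Lean document; each statement's English description precedes it below -/
import Mathlib

section
/- Let V be a finite-dimensional ℂ-vector space, A(0) : V → V a nilpotent endomorphism, and M₀ an invertible matrix (nondegenerate bilinear form) on V satisfying A(0)ᵗ · M₀ + M₀ · A(0) = 0. Let A(q) ∈ End(V) ⊗ ℂ⟦q⟧ be given with constant term A(0). Then there exists a unique M(q) ∈ End(V) ⊗ ℂ⟦q⟧ with M(q)|_{q=0} = M₀ satisfying the covariant-constancy equation q·dM/dq = A(q)ᵗ · M(q) + M(q) · A(q). -/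
open Matrix

/-!
Split the coefficient of `q^k` in `A(q)ᵀ M(q) + M(q) A(q)` as `S(M_k) + R_k`, where
`S X = A₀ᵀ X + X A₀` and `R_k` involves only `M_j` with `j < k`. The equation at `k` then reads
`(k - S) M_k = R_k`. At `k = 0` it is the hypothesis `S M₀ = 0`; for `k > 0` the operator
`k - S` is invertible because `S` is nilpotent (it is the sum of the commuting nilpotent
multiplications by `A₀ᵀ` and `A₀`), so each `M_k` is uniquely determined by the earlier ones.
-/

theorem WellFoundedLT.existsUnique_of_existsUnique_step {ι X : Type*} [Preorder ι]
    [WellFoundedLT ι] [Nonempty X] (P : ι → (ι → X) → X → Prop)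
    (hP : ∀ i p q, (∀ j < i, p j = q j) → ∀ x, P i p x ↔ P i q x)
    (hstep : ∀ i p, ∃! x, P i p x) :
    ∃! p : ι → X, ∀ i, P i p (p i) := by
  classical
  choose G hG hG_unique using hstep
  have hG_congr : ∀ i p q, (∀ j < i, p j = q j) → G i p = G i q := fun i p q h =>
    hG_unique i q _ ((hP i p q h _).1 (hG i p))
  let extend (i : ι) (f : ∀ j < i, X) : ι → X :=
    fun j => if hj : j < i then f j hj else Classical.arbitrary X
  let p : ι → X := WellFoundedLT.fix fun i f => G i (extend i f)
  have hp : ∀ i, p i = G i p := fun i => by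
    change WellFoundedLT.fix _ i = _
    rw [WellFoundedLT.fix_eq]
    exact hG_congr i _ _ fun j hj => dif_pos hj
  refine ⟨p, fun i => hp i ▸ hG i p, fun q hq => funext fun i => ?_⟩
  induction i using WellFoundedLT.induction with
  | _ i ih => rw [hG_unique i q _ (hq i), hp i, hG_congr i q p ih]

theorem LinearMap.isNilpotent_mulLeft_add_mulRight {R A : Type*} [CommSemiring R] [Ring A]
    [Algebra R A] {a b : A} (ha : IsNilpotent a) (hb : IsNilpotent b) :
    IsNilpotent (mulLeft R a + mulRight R b) :=
  (commute_mulLeft_right a b).isNilpotent_add ((isNilpotent_mulLeft_iff R a).2 ha)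
    ((isNilpotent_mulRight_iff R b).2 hb)

theorem IsNilpotent.isUnit_natCast_sub {K E : Type*} [Field K] [CharZero K] [Ring E]
    [Algebra K E] {N : E} (hN : IsNilpotent N) {k : ℕ} (hk : k ≠ 0) : IsUnit ((k : E) - N) := by
  have hk_unit : IsUnit (k : E) := by
    rw [← map_natCast (algebraMap K E)]
    exact (isUnit_iff_ne_zero.2 (Nat.cast_ne_zero.2 hk)).map _
  rw [sub_eq_add_neg]
  exact hN.neg.isUnit_add_left_of_commute hk_unit (Nat.cast_commute _ _).symm

section

variable {n R : Type*} [Fintype n] [CommRing R]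

def lowerOrder (A p : ℕ → Matrix n n R) (k : ℕ) : Matrix n n R :=
  ∑ i ∈ Finset.range k, ((A (k - i))ᵀ * p i + p i * A (k - i))

theorem lowerOrder_congr (A : ℕ → Matrix n n R) {p q : ℕ → Matrix n n R} {k : ℕ}
    (h : ∀ j < k, p j = q j) : lowerOrder A p k = lowerOrder A q k :=
  Finset.sum_congr rfl fun i hi => by rw [h i (Finset.mem_range.1 hi)]

variable [DecidableEq n]

noncomputable def sylvester (B : Matrix n n R) : Module.End R (Matrix n n R) :=
  LinearMap.mulLeft R Bᵀ + LinearMap.mulRight R B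

theorem sylvester_apply (B X : Matrix n n R) : sylvester B X = Bᵀ * X + X * B :=
  rfl

theorem isNilpotent_sylvester {B : Matrix n n R} (hB : IsNilpotent B) :
    IsNilpotent (sylvester B) :=
  LinearMap.isNilpotent_mulLeft_add_mulRight (isNilpotent_transpose_iff.2 hB) hB

theorem sum_antidiagonal_eq_sylvester_add_lowerOrder (A p : ℕ → Matrix n n R) (k : ℕ) :
    ∑ ij ∈ Finset.HasAntidiagonal.antidiagonal k, ((A ij.1)ᵀ * p ij.2 + p ij.1 * A ij.2) =
      sylvester (A 0) (p k) + lowerOrder A p k := by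
  rw [Finset.sum_add_distrib, ← Finset.Nat.sum_antidiagonal_swap, ← Finset.sum_add_distrib]
  simp only [Prod.fst_swap, Prod.snd_swap]
  rw [Finset.Nat.sum_antidiagonal_eq_sum_range_succ (fun i j => (A j)ᵀ * p i + p i * A j),
    Finset.sum_range_succ, Nat.sub_self, add_comm, sylvester_apply, lowerOrder]

theorem existsUnique_next_coeff {K : Type*} [Field K] [CharZero K]
    {A : ℕ → Matrix n n K} (hA0 : IsNilpotent (A 0)) {M0 : Matrix n n K}
    (hskew : (A 0)ᵀ * M0 + M0 * A 0 = 0) (k : ℕ) (p : ℕ → Matrix n n K) :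
    ∃! x, (k = 0 → x = M0) ∧ (k : K) • x = sylvester (A 0) x + lowerOrder A p k := by
  rcases eq_or_ne k 0 with rfl | hk
  · refine ⟨M0, ⟨fun _ => rfl, ?_⟩, fun x hx => hx.1 rfl⟩
    simp [sylvester_apply, hskew, lowerOrder]
  · have hbij : Function.Bijective ((k : Module.End K (Matrix n n K)) - sylvester (A 0)) :=
      Module.End.isUnit_iff _ |>.1 ((isNilpotent_sylvester hA0).isUnit_natCast_sub (K := K) hk)
    simpa [hk, Module.End.natCast_apply, Nat.cast_smul_eq_nsmul, sub_eq_iff_eq_add'] using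
      hbij.existsUnique (lowerOrder A p k)

end

theorem stmt1_general {n : Type} [Fintype n] [DecidableEq n]
    (A : ℕ → Matrix n n ℂ) (hA0 : IsNilpotent (A 0))
    (M0 : Matrix n n ℂ)
    (hskew : (A 0)ᵀ * M0 + M0 * (A 0) = 0) :
    ∃! M : ℕ → Matrix n n ℂ, M 0 = M0 ∧
      ∀ k : ℕ, (k : ℂ) • M k =
        ∑ ij ∈ Finset.HasAntidiagonal.antidiagonal k, ((A ij.1)ᵀ * M ij.2 + M ij.1 * A ij.2) := by
  have hsplit : ∀ M : ℕ → Matrix n n ℂ, (M 0 = M0 ∧ ∀ k : ℕ, (k : ℂ) • M k =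
      ∑ ij ∈ Finset.HasAntidiagonal.antidiagonal k, ((A ij.1)ᵀ * M ij.2 + M ij.1 * A ij.2)) ↔
      ∀ k, (k = 0 → M k = M0) ∧ (k : ℂ) • M k = sylvester (A 0) (M k) + lowerOrder A M k := by
    simp only [sum_antidiagonal_eq_sylvester_add_lowerOrder, forall_and, forall_eq, implies_true]
  simp only [hsplit]
  exact WellFoundedLT.existsUnique_of_existsUnique_step _
    (fun k p q h x => by rw [lowerOrder_congr A h]) (existsUnique_next_coeff hA0 hskew)

/-- Unique covariantly-constant extension of a pairing: given `A(q) = Σ A_k q^k` with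
`A(0)` nilpotent, and an invertible `M₀` with `A(0)ᵗM₀ + M₀A(0) = 0`, there is a unique
power series of matrices `M(q)` with `M(0) = M₀` solving `q·dM/dq = A(q)ᵗM(q) + M(q)A(q)`
(stated coefficientwise: `k·M_k = Σ_{i+j=k} (A_iᵗ M_j + M_i A_j)`). -/
theorem stmt1 {n : Type} [Fintype n] [DecidableEq n]
    (A : ℕ → Matrix n n ℂ) (hA0 : IsNilpotent (A 0))
    (M0 : Matrix n n ℂ) (hM0 : IsUnit M0)
    (hskew : (A 0)ᵀ * M0 + M0 * (A 0) = 0) :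
    ∃! M : ℕ → Matrix n n ℂ, M 0 = M0 ∧
      ∀ k : ℕ, (k : ℂ) • M k =
        ∑ ij ∈ Finset.HasAntidiagonal.antidiagonal k, ((A ij.1)ᵀ * M ij.2 + M ij.1 * A ij.2) :=
  stmt1_general A hA0 M0 hskew
end

section
/- Let N be a nilpotent endomorphism of a finite-dimensional ℂ-vector space V with N^{n+1} = 0. Then there exists a unique increasing filtration 0 ⊆ W_{≤−n} ⊆ W_{≤−n+1} ⊆ … ⊆ W_{≤n} = V such that N(W_{≤p}) ⊆ W_{≤p−2} for all p, and N^p induces an isomorphism Gr^W_p V → Gr^W_{−p} V for all p ≥ 0. -/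
/-!
Induct on `n`, working relative to a pair `I ≤ K` of `N`-stable submodules with
`N^{n+1} K ⊆ I`, so that `W` runs from `I` to `K` and never leaves `V`.
Any weight filtration has `W_{n-1} = {x ∈ K | N^n x ∈ I}` and `W_{-n} = I + N^n K`, and between
these two steps it is a weight filtration, with `n - 1` in place of `n`, for the pair
`I + N^n K ≤ {x ∈ K | N^n x ∈ I}`. This gives uniqueness; conversely, gluing `I`, the
filtration obtained by induction, and `K` gives existence.
-/

open Submodule

variable {R V : Type*} [Ring R] [AddCommGroup V] [Module R V]

structure IsWeightFiltration (N : V →ₗ[R] V) (n : ℕ) (I K : Submodule R V)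
    (W : ℤ → Submodule R V) : Prop where
  mono : Monotone W
  eq_lower : ∀ p : ℤ, p < -(n : ℤ) → W p = I
  eq_upper : ∀ p : ℤ, (n : ℤ) ≤ p → W p = K
  map_mem : ∀ p : ℤ, ∀ x ∈ W p, N x ∈ W (p - 2)
  exists_pow_sub_mem : ∀ p : ℕ, ∀ y ∈ W (-(p : ℤ)),
    ∃ x ∈ W (p : ℤ), (N ^ p) x - y ∈ W (-(p : ℤ) - 1)
  mem_of_pow_mem : ∀ p : ℕ, ∀ x ∈ W (p : ℤ),
    (N ^ p) x ∈ W (-(p : ℤ) - 1) → x ∈ W ((p : ℤ) - 1)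

/-- The kernel of `N^k : K → V ⧸ I`, pulled back to `K`. -/
def relKer (N : V →ₗ[R] V) (k : ℕ) (I K : Submodule R V) : Submodule R V :=
  K ⊓ I.comap (N ^ k)

/-- The preimage in `V` of the image of `N^k : K → V ⧸ I`. -/
def relRange (N : V →ₗ[R] V) (k : ℕ) (I K : Submodule R V) : Submodule R V :=
  I ⊔ K.map (N ^ k)

def extendFiltration (n : ℕ) (I K : Submodule R V) (W : ℤ → Submodule R V) (p : ℤ) :
    Submodule R V :=
  if p < -(n : ℤ) then I else if (n : ℤ) ≤ p then K else W p

def restrictFiltration (n : ℕ) (W : ℤ → Submodule R V) (p : ℤ) : Submodule R V :=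
  W (max (-(n : ℤ) - 1) (min p n))

variable {N : V →ₗ[R] V} {n : ℕ} {I K : Submodule R V} {W W₁ W₂ : ℤ → Submodule R V}

theorem isWeightFiltration_iff :
    IsWeightFiltration N n I K W ↔
      Monotone W ∧
      (∀ p : ℤ, p < -(n : ℤ) → W p = I) ∧
      (∀ p : ℤ, (n : ℤ) ≤ p → W p = K) ∧
      (∀ p : ℤ, ∀ x ∈ W p, N x ∈ W (p - 2)) ∧
      (∀ p : ℕ, ∀ y ∈ W (-(p : ℤ)),
        ∃ x ∈ W (p : ℤ), (N ^ p) x - y ∈ W (-(p : ℤ) - 1)) ∧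
      (∀ p : ℕ, ∀ x ∈ W (p : ℤ),
        (N ^ p) x ∈ W (-(p : ℤ) - 1) → x ∈ W ((p : ℤ) - 1)) :=
  ⟨fun h => ⟨h.1, h.2, h.3, h.4, h.5, h.6⟩,
    fun ⟨h₁, h₂, h₃, h₄, h₅, h₆⟩ => ⟨h₁, h₂, h₃, h₄, h₅, h₆⟩⟩

theorem pow_apply_comm (k : ℕ) (x : V) : (N ^ k) (N x) = N ((N ^ k) x) := by
  rw [← Module.End.mul_apply, ← pow_succ, pow_succ', Module.End.mul_apply]

namespace IsWeightFiltration

theorem mk' (mono : Monotone W) (eq_lower : ∀ p : ℤ, p < -(n : ℤ) → W p = I)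
    (eq_upper : ∀ p : ℤ, (n : ℤ) ≤ p → W p = K) (map_mem : ∀ p : ℤ, ∀ x ∈ W p, N x ∈ W (p - 2))
    (exists_pow_sub_mem : ∀ p : ℕ, p ≤ n → ∀ y ∈ W (-(p : ℤ)),
      ∃ x ∈ W (p : ℤ), (N ^ p) x - y ∈ W (-(p : ℤ) - 1))
    (mem_of_pow_mem : ∀ p : ℕ, p ≤ n → ∀ x ∈ W (p : ℤ),
      (N ^ p) x ∈ W (-(p : ℤ) - 1) → x ∈ W ((p : ℤ) - 1)) :
    IsWeightFiltration N n I K W where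
  mono := mono
  eq_lower := eq_lower
  eq_upper := eq_upper
  map_mem := map_mem
  exists_pow_sub_mem p y hy := by
    rcases le_or_gt p n with hp | hp
    · exact exists_pow_sub_mem p hp y hy
    · refine ⟨0, zero_mem _, ?_⟩
      rw [eq_lower _ (by omega)] at hy
      rw [eq_lower _ (by omega), map_zero, zero_sub]
      exact neg_mem hy
  mem_of_pow_mem p x hx hNx := by
    rcases le_or_gt p n with hp | hp
    · exact mem_of_pow_mem p hp x hx hNx
    · rwa [eq_upper _ (by omega), ← eq_upper p (by omega)]

theorem lower_le (h : IsWeightFiltration N n I K W) (p : ℤ) : I ≤ W p := by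
  rcases lt_or_ge p (-n) with hp | hp
  · exact (h.eq_lower p hp).ge
  · rw [← h.eq_lower (-n - 1) (by omega)]
    exact h.mono (by omega)

theorem le_upper (h : IsWeightFiltration N n I K W) (p : ℤ) : W p ≤ K := by
  rcases lt_or_ge p n with hp | hp
  · rw [← h.eq_upper n le_rfl]
    exact h.mono hp.le
  · exact (h.eq_upper p hp).le

theorem pow_mem (h : IsWeightFiltration N n I K W) (k : ℕ) {p : ℤ} {x : V} (hx : x ∈ W p) :
    (N ^ k) x ∈ W (p - 2 * k) := by
  induction k with
  | zero => simpa using hx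
  | succ k ih =>
    rw [pow_succ', Module.End.mul_apply]
    convert h.map_mem _ _ ih using 2
    push_cast
    ring

theorem eq_relKer (h : IsWeightFiltration N n I K W) : W (n - 1) = relKer N n I K := by
  ext x
  constructor
  · intro hx
    have hNx := h.pow_mem n hx
    rw [show (n : ℤ) - 1 - 2 * n = -n - 1 by ring, h.eq_lower _ (by omega)] at hNx
    exact ⟨h.le_upper _ hx, hNx⟩
  · rintro ⟨hxK, hxI⟩
    refine h.mem_of_pow_mem n x (by rwa [h.eq_upper n le_rfl]) ?_
    rwa [h.eq_lower _ (by omega)]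

theorem eq_relRange (h : IsWeightFiltration N n I K W) : W (-n) = relRange N n I K := by
  apply le_antisymm
  · intro y hy
    obtain ⟨x, hx, hxy⟩ := h.exists_pow_sub_mem n y hy
    rw [h.eq_upper n le_rfl] at hx
    rw [h.eq_lower _ (by omega)] at hxy
    exact mem_sup.2 ⟨_, neg_mem hxy, _, mem_map_of_mem hx, by abel⟩
  · refine sup_le (h.lower_le _) ?_
    rintro _ ⟨x, hx, rfl⟩
    have hNx := h.pow_mem n (show x ∈ W n by rwa [h.eq_upper n le_rfl])
    rwa [show (n : ℤ) - 2 * n = -n by ring] at hNx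

theorem ext (h₁ : IsWeightFiltration N n I K W₁) (h₂ : IsWeightFiltration N n I K W₂)
    (h : ∀ p : ℤ, -(n : ℤ) ≤ p → p < n → W₁ p = W₂ p) : W₁ = W₂ := by
  funext p
  rcases lt_or_ge p (-n) with hp | hp
  · rw [h₁.eq_lower p hp, h₂.eq_lower p hp]
  rcases lt_or_ge p n with hp' | hp'
  · exact h p hp hp'
  · rw [h₁.eq_upper p hp', h₂.eq_upper p hp']

end IsWeightFiltration

theorem isWeightFiltration_zero (hIK : I ≤ K) (hI : I ≤ I.comap N) (hK : K ≤ K.comap N)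
    (hKI : K ≤ I.comap (N ^ 1)) :
    IsWeightFiltration N 0 I K (fun p => if p < 0 then I else K) := by
  refine .mk' (fun p q hpq => ?_) (fun p hp => if_pos (by omega))
    (fun p hp => if_neg (by omega)) (fun p x hx => ?_) (fun p hp y hy => ?_)
    (fun p hp x _ hNx => ?_)
  · split_ifs with hp hq hq
    exacts [le_rfl, hIK, absurd (hpq.trans_lt hq) hp, le_rfl]
  · split_ifs at hx ⊢ <;> first | omega | exact hI hx | exact hK hx | simpa using hKI hx
  · obtain rfl : p = 0 := by omega
    exact ⟨y, by simpa using hy, by simp⟩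
  · obtain rfl : p = 0 := by omega
    simpa using hNx

theorem relRange_le_relKer (hIK : I ≤ K) (hI : I ≤ I.comap N) (hK : K ≤ K.comap N)
    (hKI : K ≤ I.comap (N ^ (n + 2))) : relRange N (n + 1) I K ≤ relKer N (n + 1) I K := by
  refine sup_le (le_inf hIK (le_comap_pow_of_le_comap I hI _)) ?_
  rintro _ ⟨x, hx, rfl⟩
  refine ⟨le_comap_pow_of_le_comap K hK _ hx, ?_⟩
  have hNx : (N ^ n) ((N ^ (n + 2)) x) ∈ I := le_comap_pow_of_le_comap I hI n (hKI hx)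
  rwa [← Module.End.mul_apply, ← pow_add, show n + (n + 2) = (n + 1) + (n + 1) by ring,
    pow_add, Module.End.mul_apply] at hNx

theorem relRange_le_comap (hI : I ≤ I.comap N) (hK : K ≤ K.comap N) (k : ℕ) :
    relRange N k I K ≤ (relRange N k I K).comap N := by
  refine sup_le (hI.trans (comap_mono le_sup_left)) ?_
  rintro _ ⟨x, hx, rfl⟩
  rw [mem_comap, ← pow_apply_comm]
  exact mem_sup_right (mem_map_of_mem (hK hx))

theorem relKer_le_comap (hI : I ≤ I.comap N) (hK : K ≤ K.comap N) (k : ℕ) :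
    relKer N k I K ≤ (relKer N k I K).comap N := by
  rintro x ⟨hxK, hxI⟩
  refine ⟨hK hxK, ?_⟩
  show (N ^ k) (N x) ∈ I
  rw [pow_apply_comm]
  exact hI hxI

theorem relKer_le_comap_pow (k : ℕ) : relKer N k I K ≤ (relRange N k I K).comap (N ^ k) :=
  fun _ hx => mem_sup_left hx.2

theorem relRange_relKer_le_comap (hI : I ≤ I.comap N) (hKI : K ≤ I.comap (N ^ (n + 2))) :
    relRange N n (relRange N (n + 1) I K) (relKer N (n + 1) I K) ≤ I.comap N := by
  refine sup_le (sup_le hI ?_) ?_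
  · rintro _ ⟨x, hx, rfl⟩
    rw [mem_comap, ← Module.End.mul_apply, ← pow_succ']
    exact hKI hx
  · rintro _ ⟨x, hx, rfl⟩
    rw [mem_comap, ← Module.End.mul_apply, ← pow_succ']
    exact hx.2

theorem le_comap_relKer_relKer (hK : K ≤ K.comap N) (hKI : K ≤ I.comap (N ^ (n + 2))) :
    K ≤ (relKer N n (relRange N (n + 1) I K) (relKer N (n + 1) I K)).comap N := by
  intro x hx
  refine ⟨⟨hK hx, ?_⟩, ?_⟩
  · show (N ^ (n + 1)) (N x) ∈ I
    rw [← Module.End.mul_apply, ← pow_succ]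
    exact hKI hx
  · show (N ^ n) (N x) ∈ relRange N (n + 1) I K
    rw [← Module.End.mul_apply, ← pow_succ]
    exact mem_sup_right (mem_map_of_mem hx)

theorem extendFiltration_of_lt {p : ℤ} (hp : p < -(n : ℤ)) : extendFiltration n I K W p = I :=
  if_pos hp

theorem extendFiltration_of_le {p : ℤ} (hp : (n : ℤ) ≤ p) : extendFiltration n I K W p = K := by
  rw [extendFiltration, if_neg (by omega), if_pos hp]

theorem extendFiltration_succ_of_mem_Icc {p : ℤ} (hp : -(n : ℤ) - 1 ≤ p) (hp' : p ≤ n) :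
    extendFiltration (n + 1) I K W p = W p := by
  rw [extendFiltration, if_neg (by omega), if_neg (by omega)]

theorem extendFiltration_map_mem (hI : I ≤ I.comap N) (hK : K ≤ K.comap N)
    (hKI : K ≤ I.comap (N ^ (n + 2)))
    (h : IsWeightFiltration N n (relRange N (n + 1) I K) (relKer N (n + 1) I K) W) (p : ℤ)
    {x : V} (hx : x ∈ extendFiltration (n + 1) I K W p) :
    N x ∈ extendFiltration (n + 1) I K W (p - 2) := by
  rcases lt_or_ge p (-n - 1) with hp | hp
  · rw [extendFiltration_of_lt (by omega)] at hx ⊢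
    exact hI hx
  rcases le_or_gt ((n : ℤ) + 1) p with hp' | hp'
  · rw [extendFiltration_of_le (by omega)] at hx
    rcases le_or_gt ((n : ℤ) + 1) (p - 2) with hp'' | hp''
    · rw [extendFiltration_of_le (by omega)]
      exact hK hx
    rw [extendFiltration_succ_of_mem_Icc (by omega) (by omega)]
    refine h.mono (show (n : ℤ) - 1 ≤ p - 2 by omega) ?_
    rw [h.eq_relKer]
    exact le_comap_relKer_relKer hK hKI hx
  rw [extendFiltration_succ_of_mem_Icc (by omega) (by omega)] at hx
  rcases le_or_gt (-(n : ℤ) - 1) (p - 2) with hp'' | hp''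
  · rw [extendFiltration_succ_of_mem_Icc (by omega) (by omega)]
    exact h.map_mem p x hx
  rw [extendFiltration_of_lt (by omega)]
  refine relRange_relKer_le_comap hI hKI ?_
  rw [← h.eq_relRange]
  exact h.mono (by omega) hx

theorem isWeightFiltration_extendFiltration (hIK : I ≤ K) (hI : I ≤ I.comap N)
    (hK : K ≤ K.comap N) (hKI : K ≤ I.comap (N ^ (n + 2)))
    (h : IsWeightFiltration N n (relRange N (n + 1) I K) (relKer N (n + 1) I K) W) :
    IsWeightFiltration N (n + 1) I K (extendFiltration (n + 1) I K W) := by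
  have hlo (p : ℤ) : I ≤ W p := le_sup_left.trans (h.lower_le p)
  have hup (p : ℤ) : W p ≤ K := (h.le_upper p).trans inf_le_left
  refine .mk' (fun p q hpq => ?_) (fun p => extendFiltration_of_lt)
    (fun p => extendFiltration_of_le) (fun p x => extendFiltration_map_mem hI hK hKI h p)
    (fun p hp y hy => ?_) (fun p hp x hx hNx => ?_)
  · unfold extendFiltration
    split_ifs <;>
      first | omega | exact le_rfl | exact hIK | exact hlo q | exact hup p | exact h.mono hpq
  · rcases hp.lt_or_eq with hp | rfl
    · rw [extendFiltration_succ_of_mem_Icc (by omega) (by omega)] at hy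
      rw [extendFiltration_succ_of_mem_Icc (p := p) (by omega) (by omega),
        extendFiltration_succ_of_mem_Icc (p := -p - 1) (by omega) (by omega)]
      exact h.exists_pow_sub_mem p y hy
    rw [extendFiltration_succ_of_mem_Icc (by omega) (by omega), h.eq_lower _ (by omega)] at hy
    obtain ⟨i, hi, _, ⟨x, hx, rfl⟩, rfl⟩ := mem_sup.1 hy
    refine ⟨x, by rwa [extendFiltration_of_le le_rfl], ?_⟩
    rw [extendFiltration_of_lt (by omega), sub_add_cancel_right]
    exact neg_mem hi
  · rcases hp.lt_or_eq with hp | rfl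
    · rw [extendFiltration_succ_of_mem_Icc (by omega) (by omega)] at hx hNx ⊢
      exact h.mem_of_pow_mem p x hx hNx
    rw [extendFiltration_of_le le_rfl] at hx
    rw [extendFiltration_of_lt (by omega)] at hNx
    rw [extendFiltration_succ_of_mem_Icc (by omega) (by omega), h.eq_upper _ (by omega)]
    exact ⟨hx, hNx⟩

theorem restrictFiltration_of_mem_Icc {p : ℤ} (hp : -(n : ℤ) - 1 ≤ p) (hp' : p ≤ n) :
    restrictFiltration n W p = W p := by
  rw [restrictFiltration, min_eq_left hp', max_eq_right hp]

theorem isWeightFiltration_restrictFiltration (h : IsWeightFiltration N (n + 1) I K W) :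
    IsWeightFiltration N n (relRange N (n + 1) I K) (relKer N (n + 1) I K)
      (restrictFiltration n W) := by
  have hlower := h.eq_relRange
  have hupper := h.eq_relKer
  push_cast at hlower hupper
  rw [add_sub_cancel_right] at hupper
  refine .mk' (fun p q hpq => h.mono (by omega)) (fun p hp => ?_) (fun p hp => ?_)
    (fun p x hx => h.mono (by omega) (h.map_mem _ x hx)) (fun p hp y hy => ?_)
    (fun p hp x hx hNx => ?_)
  · rwa [restrictFiltration, max_eq_left (by omega), ← neg_add']
  · rwa [restrictFiltration, min_eq_right hp, max_eq_right (by omega)]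
  · rw [restrictFiltration_of_mem_Icc (by omega) (by omega)] at hy
    rw [restrictFiltration_of_mem_Icc (p := p) (by omega) (by omega),
      restrictFiltration_of_mem_Icc (p := -p - 1) (by omega) (by omega)]
    exact h.exists_pow_sub_mem p y hy
  · rw [restrictFiltration_of_mem_Icc (by omega) (by omega)] at hx hNx
    rw [restrictFiltration_of_mem_Icc (by omega) (by omega)]
    exact h.mem_of_pow_mem p x hx hNx

theorem existsUnique_isWeightFiltration (N : V →ₗ[R] V) :
    ∀ (n : ℕ) {I K : Submodule R V}, I ≤ K → I ≤ I.comap N → K ≤ K.comap N →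
      K ≤ I.comap (N ^ (n + 1)) → ∃! W, IsWeightFiltration N n I K W
  | 0, I, K, hIK, hI, hK, hKI =>
    have h₀ := isWeightFiltration_zero hIK hI hK hKI
    ⟨_, h₀, fun _ h => h.ext h₀ fun _ hp hp' => absurd (hp.trans_lt hp') (by simp)⟩
  | n + 1, I, K, hIK, hI, hK, hKI => by
    obtain ⟨W, hW, hW_unique⟩ := existsUnique_isWeightFiltration N n
      (relRange_le_relKer hIK hI hK hKI) (relRange_le_comap hI hK _) (relKer_le_comap hI hK _)
      (relKer_le_comap_pow _)
    have hext := isWeightFiltration_extendFiltration hIK hI hK hKI hW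
    refine ⟨_, hext, fun W₁ hW₁ => hW₁.ext hext fun p hp hp' => ?_⟩
    push_cast at hp hp'
    rw [extendFiltration_succ_of_mem_Icc (by omega) (by omega),
      ← hW_unique _ (isWeightFiltration_restrictFiltration hW₁),
      restrictFiltration_of_mem_Icc (by omega) (by omega)]

theorem stmt4_general {V : Type} [AddCommGroup V] [Module ℂ V]
    (n : ℕ) (N : V →ₗ[ℂ] V) (hN : N ^ (n + 1) = 0) :
    ∃! W : ℤ → Submodule ℂ V,
      Monotone W ∧
      (∀ p : ℤ, p < -(n : ℤ) → W p = ⊥) ∧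
      (∀ p : ℤ, (n : ℤ) ≤ p → W p = ⊤) ∧
      (∀ p : ℤ, ∀ x ∈ W p, N x ∈ W (p - 2)) ∧
      (∀ p : ℕ, ∀ y ∈ W (-(p : ℤ)),
        ∃ x ∈ W (p : ℤ), (N ^ p) x - y ∈ W (-(p : ℤ) - 1)) ∧
      (∀ p : ℕ, ∀ x ∈ W (p : ℤ),
        (N ^ p) x ∈ W (-(p : ℤ) - 1) → x ∈ W ((p : ℤ) - 1)) := by
  have hnil : (⊤ : Submodule ℂ V) ≤ (⊥ : Submodule ℂ V).comap (N ^ (n + 1)) := by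
    simp [hN]
  simpa only [isWeightFiltration_iff] using
    existsUnique_isWeightFiltration N n bot_le (by simp) (by simp) hnil

/-- Existence and uniqueness of the monodromy weight filtration (centered at `0`) of a
nilpotent endomorphism `N` with `N^{n+1} = 0`: a unique increasing filtration `W` with
`W_{≤p} = 0` for `p < -n`, `W_{≤p} = V` for `p ≥ n`, `N(W_{≤p}) ⊆ W_{≤p-2}`, and such that
`N^p` induces an isomorphism `Gr_p → Gr_{-p}` for all `p ≥ 0` (stated elementwise). -/
theorem stmt4 {V : Type} [AddCommGroup V] [Module ℂ V] [FiniteDimensional ℂ V]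
    (n : ℕ) (N : V →ₗ[ℂ] V) (hN : N ^ (n + 1) = 0) :
    ∃! W : ℤ → Submodule ℂ V,
      Monotone W ∧
      (∀ p : ℤ, p < -(n : ℤ) → W p = ⊥) ∧
      (∀ p : ℤ, (n : ℤ) ≤ p → W p = ⊤) ∧
      (∀ p : ℤ, ∀ x ∈ W p, N x ∈ W (p - 2)) ∧
      (∀ p : ℕ, ∀ y ∈ W (-(p : ℤ)),
        ∃ x ∈ W (p : ℤ), (N ^ p) x - y ∈ W (-(p : ℤ) - 1)) ∧
      (∀ p : ℕ, ∀ x ∈ W (p : ℤ),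
        (N ^ p) x ∈ W (-(p : ℤ) - 1) → x ∈ W ((p : ℤ) - 1)) :=
  stmt4_general n N hN
end

section
/- Let K = ℂ((q)) and let V be a free K-module of finite rank with a connection written in a trivialization as ∇_{q∂_q} = q∂_q + A(q) where A(q) ∈ End(V₀) ⊗ ℂ⟦q⟧ for a ℂ-vector space V₀. Suppose A(0)·e ≠ 0 for a fixed vector e ∈ V₀, and suppose q is a coordinate such that A(q)·e is a constant vector (independent of q). If q̃ = f(q)·q with f ∈ ℂ⟦q⟧, f(0) ≠ 0, is another coordinate such that the class ∇_{q̃∂_{q̃}} e = (1 + q·f'(q)/f(q))^{-1} · A(q)·e is also constant, then f is a constant: q̃ = c·q for some c ∈ ℂ^×. -/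
/-- Uniqueness of canonical coordinates: suppose `∇_{q∂_q} = q∂_q + A(q)` with
`A(q) = Σ_k A_k q^k`, `A(0)·e ≠ 0`, and `A(q)·e` is constant (`A_k e = 0` for `k > 0`).
If `q̃ = f(q)·q` (with `f(0) ≠ 0`) is another coordinate for which
`(1 + q·f'/f)⁻¹·A(q)·e` is also constant — stated by clearing denominators as
`f·(A(q)·e) = (f + q·f')·c`, i.e. coefficientwise
`a_k • (A(0)e) = ((k+1)·a_k) • c` — then `f` is a constant power series. -/
theorem stmt5 {V : Type} [AddCommGroup V] [Module ℂ V]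
    (A : ℕ → (V →ₗ[ℂ] V)) (e : V)
    (hA0 : A 0 e ≠ 0)
    (hconst : ∀ k : ℕ, 0 < k → A k e = 0)
    (f : PowerSeries ℂ) (hf0 : PowerSeries.constantCoeff f ≠ 0)
    (hcan : ∃ c : V, ∀ k : ℕ,
      (PowerSeries.coeff k f) • (A 0 e) =
        (((k : ℂ) + 1) * PowerSeries.coeff k f) • c) :
    ∃ c : ℂ, f = PowerSeries.C c := by
  obtain ⟨c, hc⟩ := hcan
  have h0 := hc 0
  have ha0 : PowerSeries.coeff 0 f ≠ 0 := by
    rwa [PowerSeries.coeff_zero_eq_constantCoeff]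
  have hce : c = A 0 e := by
    have := h0
    simp only [Nat.cast_zero, zero_add, one_mul] at this
    have := smul_right_injective V ha0 this
    exact this.symm
  refine ⟨PowerSeries.coeff 0 f, ?_⟩
  ext k
  rcases Nat.eq_zero_or_pos k with rfl | hk
  · simp
  · have hck := hc k
    rw [hce] at hck
    have : ((k : ℂ) * PowerSeries.coeff k f) • A 0 e = 0 := by
      have h := sub_eq_zero_of_eq hck.symm
      rw [← sub_smul] at h
      convert h using 2
      ring
    have hk0 : PowerSeries.coeff k f = 0 := by
      rcases smul_eq_zero.mp this with h | h
      · have : (k : ℂ) ≠ 0 := Nat.cast_ne_zero.mpr hk.ne'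
        exact (mul_eq_zero.mp h).resolve_left this
      · exact absurd h hA0
    simp [hk0, PowerSeries.coeff_C, hk.ne']
end

section
/- Let 𝕂 be a field of characteristic 0 and let W^− = 𝕂⟦u⟧, W^∞ = 𝕂((u)). Let E be a 𝕂⟦u⟧-module. Then there is a natural isomorphism Hom_{𝕂⟦u⟧}(E, 𝕂⟦u⟧) ≅ Hom_{𝕂}(E ⊗_{𝕂⟦u⟧} (𝕂((u))/u𝕂⟦u⟧), 𝕂). -/
open scoped TensorProduct

/-- The `𝕂⟦u⟧`-submodule `u·𝕂⟦u⟧` of `𝕂((u))`. -/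
noncomputable def uLattice (𝕂 : Type) [Field 𝕂] :
    Submodule (PowerSeries 𝕂) (LaurentSeries 𝕂) :=
  Submodule.map (Algebra.linearMap (PowerSeries 𝕂) (LaurentSeries 𝕂))
    (Ideal.span {PowerSeries.X})

/-!
The pairing `𝕂⟦u⟧ × 𝕂((u))/u𝕂⟦u⟧ → 𝕂`, `⟨f, [x]⟩ = coefficient of u⁰ in f x`, is `𝕂⟦u⟧`-balanced
and perfect: `⟨f, u⁻ⁿ⟩` is the `n`-th coefficient of `f`, and the classes of the `u⁻ⁿ` span the
quotient over `𝕂`, so a `𝕂`-linear functional on the quotient is `⟨f, -⟩` for the unique `f`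
whose coefficients are its values on the `u⁻ⁿ`. For any balanced perfect pairing `D × Q → P`,
sending `g : E → D` to `e ⊗ q ↦ ⟨g e, q⟩` identifies `Hom_R(E, D)` with `Hom_𝕂(E ⊗_R Q, P)`.
-/

namespace TensorProduct

variable {𝕂 R : Type*} [CommSemiring 𝕂] [CommSemiring R] [Algebra 𝕂 R]
  {E Q P : Type*} [AddCommMonoid E] [Module R E] [Module 𝕂 E] [IsScalarTower 𝕂 R E]
  [AddCommMonoid Q] [Module R Q] [AddCommMonoid P] [Module 𝕂 P]

theorem ext_tmul_of_isScalarTower {g h : E ⊗[R] Q →ₗ[𝕂] P}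
    (H : ∀ e q, g (e ⊗ₜ q) = h (e ⊗ₜ q)) : g = h :=
  LinearMap.ext fun t => t.induction_on (by simp only [map_zero]) H
    fun x y hx hy => by rw [map_add, map_add, hx, hy]

variable {D : Type*} [AddCommMonoid D] [Module R D] [Module 𝕂 D] [Module 𝕂 Q]
  (B : D →ₗ[𝕂] Q →ₗ[𝕂] P) (hB : ∀ (r : R) d q, B (r • d) q = B d (r • q))

noncomputable def liftPairing [IsScalarTower 𝕂 R D] (g : E →ₗ[R] D) : E ⊗[R] Q →ₗ[𝕂] P where
  toAddHom := (liftAddHom (LinearMap.toAddMonoidHom'.comp (B.toAddMonoidHom.comp g.toAddMonoidHom))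
    fun r e q => by simp [hB]).toAddHom
  map_smul' k t := by
    induction t with
    | zero => simp
    | tmul e q => simp [smul_tmul', LinearMap.map_smul_of_tower]
    | add x y hx hy => simp_all

@[simp]
theorem liftPairing_tmul [IsScalarTower 𝕂 R D] (g : E →ₗ[R] D) (e : E) (q : Q) :
    liftPairing B hB g (e ⊗ₜ q) = B (g e) q :=
  rfl

variable (hbij : Function.Bijective B)

noncomputable def curryPairing [IsScalarTower 𝕂 R Q] (φ : E ⊗[R] Q →ₗ[𝕂] P) : E →ₗ[R] D where
  toFun e := (LinearEquiv.ofBijective B hbij).symm (φ ∘ₗ (mk R E Q e).restrictScalars 𝕂)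
  map_add' e e' := by
    rw [← map_add]
    congr 1
    ext q
    simp
  map_smul' r e := by
    apply (LinearEquiv.ofBijective B hbij).injective
    ext q
    simp [hB]

@[simp]
theorem curryPairing_apply [IsScalarTower 𝕂 R Q] (φ : E ⊗[R] Q →ₗ[𝕂] P) (e : E) (q : Q) :
    B (curryPairing B hB hbij φ e) q = φ (e ⊗ₜ q) := by
  simp [curryPairing]

noncomputable def homTensorEquivOfPairing [IsScalarTower 𝕂 R D] [IsScalarTower 𝕂 R Q] :
    (E →ₗ[R] D) ≃ₗ[𝕂] (E ⊗[R] Q →ₗ[𝕂] P) where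
  toFun := liftPairing B hB
  invFun := curryPairing B hB hbij
  map_add' g g' := ext_tmul_of_isScalarTower fun e q => by simp
  map_smul' k g := ext_tmul_of_isScalarTower fun e q => by simp
  left_inv g := LinearMap.ext fun e => hbij.injective <| LinearMap.ext fun q => by simp
  right_inv φ := ext_tmul_of_isScalarTower fun e q => by simp

end TensorProduct

open HahnSeries PowerSeries

instance LaurentSeries.instIsScalarTowerPowerSeries (𝕂 : Type*) [CommSemiring 𝕂] :
    IsScalarTower 𝕂 (PowerSeries 𝕂) (LaurentSeries 𝕂) where
  smul_assoc k f x := by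
    rw [Algebra.smul_def (k • f) x, Algebra.smul_def f x, smul_eq_C_mul,
      LaurentSeries.coe_algebraMap, map_mul, ofPowerSeries_C, mul_assoc, C_mul_eq_smul]

namespace uLattice

variable {𝕂 : Type} [Field 𝕂]

theorem mem_iff {x : LaurentSeries 𝕂} : x ∈ uLattice 𝕂 ↔ ∀ n ≤ 0, x.coeff n = 0 := by
  constructor
  · rintro ⟨p, hp, rfl⟩ n hn
    obtain ⟨q, rfl⟩ := Ideal.mem_span_singleton.1 hp
    rw [Algebra.linearMap_apply, LaurentSeries.coe_algebraMap, PowerSeries.coeff_coe]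
    split_ifs with hneg
    · rfl
    · rw [show n = 0 by omega, Int.natAbs_zero, coeff_zero_X_mul]
  · intro hx
    refine ⟨X * PowerSeries.mk fun k => x.coeff (k + 1),
      Ideal.mul_mem_right _ _ (Ideal.mem_span_singleton_self _), ?_⟩
    ext n
    rw [Algebra.linearMap_apply, LaurentSeries.coe_algebraMap, PowerSeries.coeff_coe]
    split_ifs with hneg
    · exact (hx n hneg.le).symm
    · obtain ⟨m, rfl⟩ := Int.eq_ofNat_of_zero_le (not_lt.1 hneg)
      cases m with
      | zero => simp [hx]
      | succ k => rw [Int.natAbs_natCast, coeff_succ_X_mul, coeff_mk, Nat.cast_succ]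

variable (𝕂) in
noncomputable def coeffZero : (LaurentSeries 𝕂 ⧸ uLattice 𝕂) →ₗ[𝕂] 𝕂 :=
  ((uLattice 𝕂).restrictScalars 𝕂).liftQ (coeff.linearMap 0) fun _ hx => mem_iff.1 hx 0 le_rfl

theorem coeffZero_mk (x : LaurentSeries 𝕂) :
    coeffZero 𝕂 (Submodule.Quotient.mk x) = x.coeff 0 :=
  rfl

variable (𝕂) in
noncomputable def pairing : PowerSeries 𝕂 →ₗ[𝕂] (LaurentSeries 𝕂 ⧸ uLattice 𝕂) →ₗ[𝕂] 𝕂 :=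
  LinearMap.mk₂ 𝕂 (fun f q => coeffZero 𝕂 (f • q)) (fun f f' q => by rw [add_smul, map_add])
    (fun k f q => by rw [smul_assoc, map_smul]) (fun f q q' => by rw [smul_add, map_add])
    (fun k f q => by rw [smul_comm, map_smul])

theorem pairing_apply (f : PowerSeries 𝕂) (q : LaurentSeries 𝕂 ⧸ uLattice 𝕂) :
    pairing 𝕂 f q = coeffZero 𝕂 (f • q) :=
  rfl

theorem pairing_smul (r f : PowerSeries 𝕂) (q : LaurentSeries 𝕂 ⧸ uLattice 𝕂) :
    pairing 𝕂 (r • f) q = pairing 𝕂 f (r • q) := by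
  rw [pairing_apply, pairing_apply, smul_eq_mul, mul_comm, mul_smul]

variable (𝕂) in
noncomputable def invXPow (n : ℕ) : LaurentSeries 𝕂 ⧸ uLattice 𝕂 :=
  Submodule.Quotient.mk (single (-(n : ℤ)) 1)

theorem pairing_invXPow (f : PowerSeries 𝕂) (n : ℕ) :
    pairing 𝕂 f (invXPow 𝕂 n) = coeff n f := by
  rw [pairing_apply, invXPow, ← Submodule.Quotient.mk_smul, coeffZero_mk, Algebra.smul_def,
    LaurentSeries.coe_algebraMap, ← add_neg_cancel (n : ℤ), coeff_mul_single_add, mul_one,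
    ofPowerSeries_apply_coeff]

theorem mk_eq_sum_invXPow (x : LaurentSeries 𝕂) {N : ℕ} (hN : ∀ n < -(N : ℤ), x.coeff n = 0) :
    (Submodule.Quotient.mk x : LaurentSeries 𝕂 ⧸ uLattice 𝕂) =
      ∑ i ∈ Finset.range (N + 1), x.coeff (-i) • invXPow 𝕂 i := by
  simp_rw [invXPow, ← Submodule.Quotient.mk_smul]
  refine ((Submodule.Quotient.eq _).2 (mem_iff.2 fun n hn => ?_)).trans
    (map_sum (uLattice 𝕂).mkQ _ _)
  rw [coeff_sub, coeff_sum]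
  have hsupp (i : ℕ) : n = -(i : ℤ) ↔ n.natAbs = i := by omega
  simp only [HahnSeries.coeff_smul, coeff_single, smul_eq_mul, mul_ite, mul_one, mul_zero, hsupp,
    Finset.sum_ite_eq, Finset.mem_range]
  split_ifs with hnN
  · rw [show -(n.natAbs : ℤ) = n by omega, sub_self]
  · rw [hN n (by omega), sub_zero]

theorem span_range_invXPow : Submodule.span 𝕂 (Set.range (invXPow 𝕂)) = ⊤ := by
  refine Submodule.eq_top_iff'.2 fun q => ?_
  obtain ⟨x, rfl⟩ := Submodule.Quotient.mk_surjective _ q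
  rw [mk_eq_sum_invXPow x (N := (-x.order).toNat) fun n hn => coeff_eq_zero_of_lt_order (by omega)]
  exact Submodule.sum_mem _ fun i _ => Submodule.smul_mem _ _ (Submodule.subset_span ⟨i, rfl⟩)

theorem pairing_bijective : Function.Bijective (pairing 𝕂) := by
  refine ⟨(injective_iff_map_eq_zero _).2 fun f hf => ext fun n => ?_, fun φ => ?_⟩
  · rw [← pairing_invXPow, hf, LinearMap.zero_apply, map_zero]
  · exact ⟨PowerSeries.mk (φ ∘ invXPow 𝕂), LinearMap.ext_on_range span_range_invXPow fun n => by
      rw [pairing_invXPow, coeff_mk, Function.comp_apply]⟩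

end uLattice

theorem stmt9_general (𝕂 : Type) [Field 𝕂]
    (E : Type) [AddCommGroup E] [Module (PowerSeries 𝕂) E]
    [Module 𝕂 E] [IsScalarTower 𝕂 (PowerSeries 𝕂) E] :
    Nonempty ((E →ₗ[PowerSeries 𝕂] PowerSeries 𝕂) ≃ₗ[𝕂]
      ((E ⊗[PowerSeries 𝕂] (LaurentSeries 𝕂 ⧸ uLattice 𝕂)) →ₗ[𝕂] 𝕂)) :=
  ⟨TensorProduct.homTensorEquivOfPairing (uLattice.pairing 𝕂) uLattice.pairing_smul
    uLattice.pairing_bijective⟩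

/-- Hood–Jones duality (module-theoretic form): for a `𝕂⟦u⟧`-module `E`, there is a natural
isomorphism `Hom_{𝕂⟦u⟧}(E, 𝕂⟦u⟧) ≅ Hom_𝕂(E ⊗_{𝕂⟦u⟧} (𝕂((u))/u𝕂⟦u⟧), 𝕂)`. -/
theorem stmt9 (𝕂 : Type) [Field 𝕂] [CharZero 𝕂]
    (E : Type) [AddCommGroup E] [Module (PowerSeries 𝕂) E]
    [Module 𝕂 E] [IsScalarTower 𝕂 (PowerSeries 𝕂) E] :
    Nonempty ((E →ₗ[PowerSeries 𝕂] PowerSeries 𝕂) ≃ₗ[𝕂]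
      ((E ⊗[PowerSeries 𝕂] (LaurentSeries 𝕂 ⧸ uLattice 𝕂)) →ₗ[𝕂] 𝕂)) :=
  stmt9_general 𝕂 E
end

section
/- As 𝕂⟦u⟧-modules, 𝕂⟦u⟧ is isomorphic to the 𝕂-linear dual Hom_𝕂(𝕂((u))/u𝕂⟦u⟧, 𝕂), where 𝕂((u))/u𝕂⟦u⟧ is the quotient module spanned by u^{−i} for i ≥ 0, with the module structure u · u^{−i} = u^{−i+1} (and u·u^0 = 0 in the quotient). -/
instance (𝕂 : Type) [Field 𝕂] : IsScalarTower 𝕂 (PowerSeries 𝕂) (LaurentSeries 𝕂) :=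
  ⟨fun c f x => by
    rw [Algebra.smul_def, Algebra.smul_def, map_mul, mul_assoc]
    have h1 : (algebraMap 𝕂 (PowerSeries 𝕂)) c = PowerSeries.C c := rfl
    rw [h1, LaurentSeries.coe_algebraMap,
      show ((HahnSeries.ofPowerSeries ℤ 𝕂) (PowerSeries.C c)) = HahnSeries.C c from
        HahnSeries.ofPowerSeries_C c, HahnSeries.C_mul_eq_smul]
    rfl⟩

/-! Pair `f ∈ 𝕂⟦u⟧` with `x ∈ 𝕂((u))` by `⟨f, x⟩ = (f x)₀`, the coefficient of `u⁰`. The pairing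
kills `u𝕂⟦u⟧`, a `𝕂⟦u⟧`-submodule without `u⁰` terms, so it descends to the quotient, and
`⟨f, u⁻ᵐ⟩` is the `m`-th coefficient of `f`; hence `f` is determined by its functional. Conversely
`x ≡ ∑_{order x ≤ n ≤ 0} xₙ uⁿ` modulo `u𝕂⟦u⟧`, so the classes of the `u⁻ᵐ` span the quotient
and a functional `φ` is the pairing with `∑ φ(u⁻ᵐ) uᵐ`. Finally `⟨fg, x⟩ = ⟨g, fx⟩` because
multiplication is associative and commutative. -/

open HahnSeries

section

variable {𝕂 : Type} [Field 𝕂]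

theorem coeff_zero_eq_zero_of_mem_uLattice {x : LaurentSeries 𝕂} (hx : x ∈ uLattice 𝕂) :
    x.coeff 0 = 0 := by
  obtain ⟨p, hp, rfl⟩ := hx
  obtain ⟨q, rfl⟩ := Ideal.mem_span_singleton'.mp hp
  change (ofPowerSeries ℤ 𝕂 (q * PowerSeries.X)).coeff ((0 : ℕ) : ℤ) = 0
  rw [LaurentSeries.coeff_coe_powerSeries, PowerSeries.coeff_zero_mul_X]

theorem mem_uLattice_of_coeff_eq_zero {x : LaurentSeries 𝕂} (hx : ∀ n ≤ 0, x.coeff n = 0) :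
    x ∈ uLattice 𝕂 := by
  rcases eq_or_ne x 0 with rfl | hx0
  · exact zero_mem _
  have hord : 0 < x.order := by
    by_contra! h
    exact hx0 (coeff_order_eq_zero.mp (hx _ h))
  refine ⟨PowerSeries.X ^ x.order.toNat * x.powerSeriesPart,
    Ideal.mul_mem_right _ _ (Ideal.pow_mem_of_mem _ (Ideal.mem_span_singleton_self _) _ (by omega)),
    ?_⟩
  change ofPowerSeries ℤ 𝕂 _ = x
  rw [map_mul, ofPowerSeries_X_pow, Int.toNat_of_nonneg hord.le,
    LaurentSeries.single_order_mul_powerSeriesPart]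

theorem sub_sum_single_mem_uLattice (x : LaurentSeries 𝕂) :
    x - ∑ n ∈ Finset.Icc x.order 0, single n (x.coeff n) ∈ uLattice 𝕂 := by
  refine mem_uLattice_of_coeff_eq_zero fun k hk => ?_
  simp only [coeff_sub, coeff_sum, coeff_single]
  -- `coeff_single` decides `k = n` classically, so `sum_ite_eq` must use the same instance.
  rw [@Finset.sum_ite_eq _ _ _ (Classical.decEq _)]
  split_ifs with h
  · exact sub_self _
  · rw [coeff_eq_zero_of_lt_order (not_le.mp fun h' => h (Finset.mem_Icc.mpr ⟨h', hk⟩)), sub_zero]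

theorem span_mk_single_neg_eq_top :
    Submodule.span 𝕂 (Set.range fun m : ℕ =>
      (Submodule.Quotient.mk (single (-(m : ℤ)) 1 : LaurentSeries 𝕂) :
        LaurentSeries 𝕂 ⧸ uLattice 𝕂)) = ⊤ := by
  refine Submodule.eq_top_iff'.mpr fun y => ?_
  obtain ⟨x, rfl⟩ := Submodule.Quotient.mk_surjective _ y
  rw [← sub_add_cancel x (∑ n ∈ Finset.Icc x.order 0, single n (x.coeff n)),
    Submodule.Quotient.mk_add, (Submodule.Quotient.mk_eq_zero _).mpr (sub_sum_single_mem_uLattice x),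
    zero_add, ← Submodule.mkQ_apply, map_sum]
  refine Submodule.sum_mem _ fun n hn => ?_
  obtain ⟨m, rfl⟩ := Int.exists_eq_neg_ofNat (Finset.mem_Icc.mp hn).2
  have hsingle : single (-(m : ℤ)) (x.coeff (-m)) = x.coeff (-m) • single (-(m : ℤ)) (1 : 𝕂) := by
    ext k
    by_cases hk : k = -m <;> simp [hk]
  rw [hsingle, Submodule.mkQ_apply, Submodule.Quotient.mk_smul]
  exact Submodule.smul_mem _ _ (Submodule.subset_span ⟨m, rfl⟩)

variable (𝕂) in
noncomputable def powerSeriesPairing : PowerSeries 𝕂 →ₗ[𝕂] LaurentSeries 𝕂 →ₗ[𝕂] 𝕂 :=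
  LinearMap.mk₂ 𝕂 (fun f x => ((f : LaurentSeries 𝕂) * x).coeff 0)
    (fun f g x => by rw [map_add, add_mul, coeff_add])
    (fun c f x => by
      rw [PowerSeries.smul_eq_C_mul, map_mul, PowerSeries.coe_C, mul_assoc, C_mul_eq_smul,
        coeff_smul, smul_eq_mul])
    (fun f x y => by rw [mul_add, coeff_add])
    (fun c f x => by
      rw [← C_mul_eq_smul, mul_left_comm, C_mul_eq_smul, coeff_smul, smul_eq_mul])

variable (𝕂) in
theorem uLattice_le_ker_powerSeriesPairing_flip :
    (uLattice 𝕂).restrictScalars 𝕂 ≤ LinearMap.ker (powerSeriesPairing 𝕂).flip := fun x hx =>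
  LinearMap.ext fun f =>
    coeff_zero_eq_zero_of_mem_uLattice (x := (f : LaurentSeries 𝕂) * x) ((uLattice 𝕂).smul_mem f hx)

/- `liftQ` only lifts maps linear over the ring of the submodule, so the `𝕂`-bilinear pairing is
lifted through the quotient by `(uLattice 𝕂).restrictScalars 𝕂`, which is the same quotient. -/
variable (𝕂) in
noncomputable def quotientPairing :
    PowerSeries 𝕂 →ₗ[𝕂] (LaurentSeries 𝕂 ⧸ uLattice 𝕂) →ₗ[𝕂] 𝕂 :=
  ((Submodule.liftQ _ (powerSeriesPairing 𝕂).flip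
      (uLattice_le_ker_powerSeriesPairing_flip 𝕂)).flip).compl₂
    (Submodule.Quotient.restrictScalarsEquiv 𝕂 (uLattice 𝕂)).symm.toLinearMap

@[simp]
theorem quotientPairing_mk (f : PowerSeries 𝕂) (x : LaurentSeries 𝕂) :
    quotientPairing 𝕂 f (Submodule.Quotient.mk x) = ((f : LaurentSeries 𝕂) * x).coeff 0 :=
  rfl

theorem coeff_zero_coe_mul_single_neg (f : PowerSeries 𝕂) (m : ℕ) :
    ((f : LaurentSeries 𝕂) * single (-(m : ℤ)) 1).coeff 0 = PowerSeries.coeff m f := by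
  rw [← add_neg_cancel (m : ℤ), coeff_mul_single_add, mul_one,
    LaurentSeries.coeff_coe_powerSeries]

theorem quotientPairing_bijective : Function.Bijective (quotientPairing 𝕂) := by
  constructor
  · intro f g hfg
    ext m
    simpa [coeff_zero_coe_mul_single_neg] using
      LinearMap.congr_fun hfg (Submodule.Quotient.mk (single (-(m : ℤ)) 1))
  · intro φ
    refine ⟨PowerSeries.mk fun m => φ (Submodule.Quotient.mk (single (-(m : ℤ)) 1)), ?_⟩
    refine LinearMap.ext_on_range span_mk_single_neg_eq_top fun m => ?_
    rw [quotientPairing_mk, coeff_zero_coe_mul_single_neg, PowerSeries.coeff_mk]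

theorem quotientPairing_mul (f g : PowerSeries 𝕂) (x : LaurentSeries 𝕂 ⧸ uLattice 𝕂) :
    quotientPairing 𝕂 (f * g) x = quotientPairing 𝕂 g (f • x) := by
  obtain ⟨y, rfl⟩ := Submodule.Quotient.mk_surjective _ x
  rw [← Submodule.Quotient.mk_smul, quotientPairing_mk, quotientPairing_mk, Algebra.smul_def,
    LaurentSeries.coe_algebraMap, PowerSeries.coe_mul, mul_comm (f : LaurentSeries 𝕂), mul_assoc]

end

/-- As `𝕂⟦u⟧`-modules, `𝕂⟦u⟧ ≅ Hom_𝕂(𝕂((u))/u𝕂⟦u⟧, 𝕂)`, where the `𝕂⟦u⟧`-action on the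
dual is through the action on the quotient `𝕂((u))/u𝕂⟦u⟧` (the `𝕂⟦u⟧`-linearity of the
`𝕂`-linear isomorphism `e` is recorded by the compatibility `e(f·g)(x) = e(g)(f•x)`). -/
theorem stmt10 (𝕂 : Type) [Field 𝕂] :
    ∃ e : PowerSeries 𝕂 ≃ₗ[𝕂] ((LaurentSeries 𝕂 ⧸ uLattice 𝕂) →ₗ[𝕂] 𝕂),
      ∀ (f g : PowerSeries 𝕂) (x : LaurentSeries 𝕂 ⧸ uLattice 𝕂),
        e (f * g) x = e g (f • x) :=
  ⟨LinearEquiv.ofBijective (quotientPairing 𝕂) quotientPairing_bijective, quotientPairing_mul⟩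
end
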